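/- arXiv:1204.0644 — 2 statements merged into one kernel-verified Lean document; each statement's English description precedes it below -/
import Mathlib

section
/- Let G be a graph of order n ≥ 2 and let H be any graph with root vertex v and at least two vertices. Then n·(γ_R(H) − 1) + γ(G) ≤ γ_R(G∘H) ≤ n·γ_R(H). -/
open Finset
open scoped Classical

/-- `S` is a dominating set of `G`: every vertex outside `S` has a neighbor in `S`. -/
def IsDomSet {α : Type*} (G : SimpleGraph α) (S : Set α) : Prop :=
  ∀ v ∉ S, ∃ u ∈ S, G.Adj u v

/-- The domination number `γ(G)`. -/
noncomputable def domNum {α : Type*} (G : SimpleGraph α) [Fintype α] : ℕ :=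
  sInf {k | ∃ S : Finset α, IsDomSet G ↑S ∧ S.card = k}

/-- The rooted product `G ∘ H` with root `v` of `H`: one copy of `H` for each vertex of `G`,
identifying the root of the `a`-th copy with the vertex `a` of `G`. -/
def rootedProd {α β : Type*} (G : SimpleGraph α) (H : SimpleGraph β) (v : β) :
    SimpleGraph (α × β) where
  Adj x y := (x.2 = v ∧ y.2 = v ∧ G.Adj x.1 y.1) ∨ (x.1 = y.1 ∧ H.Adj x.2 y.2)
  symm := by
    constructor
    rintro x y (⟨h1, h2, h3⟩ | ⟨h1, h2⟩)
    · exact Or.inl ⟨h2, h1, h3.symm⟩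
    · exact Or.inr ⟨h1.symm, h2.symm⟩
  loopless := by
    constructor
    rintro x (⟨_, _, h⟩ | ⟨_, h⟩)
    · exact G.loopless.irrefl _ h
    · exact H.loopless.irrefl _ h

/-- The graph `G - v` obtained by deleting the vertex `v`. -/
def deleteVert {α : Type*} (G : SimpleGraph α) (v : α) : SimpleGraph {u : α // u ≠ v} :=
  SimpleGraph.comap Subtype.val G

/-- The graph `G - A` obtained by deleting a set `A` of vertices. -/
def deleteSet {α : Type*} (G : SimpleGraph α) (A : Set α) : SimpleGraph {u : α // u ∉ A} :=
  SimpleGraph.comap Subtype.val G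

/-- `f` is a Roman dominating function on `G`. -/
def IsRDF {α : Type*} (G : SimpleGraph α) (f : α → ℕ) : Prop :=
  (∀ u, f u ≤ 2) ∧ ∀ u, f u = 0 → ∃ w, G.Adj u w ∧ f w = 2

/-- The Roman domination number `γ_R(G)`. -/
noncomputable def romanDomNum {α : Type*} (G : SimpleGraph α) [Fintype α] : ℕ :=
  sInf {k | ∃ f : α → ℕ, IsRDF G f ∧ ∑ u, f u = k}

/-- `S` is an independent set of `G`. -/
def IsIndep {α : Type*} (G : SimpleGraph α) (S : Set α) : Prop :=
  ∀ u ∈ S, ∀ w ∈ S, ¬ G.Adj u w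

/-- The independence number `α(G)`. -/
noncomputable def indepNum {α : Type*} (G : SimpleGraph α) [Fintype α] : ℕ :=
  sSup {k | ∃ S : Finset α, IsIndep G ↑S ∧ S.card = k}

/-- The independent domination number `i(G)`. -/
noncomputable def indepDomNum {α : Type*} (G : SimpleGraph α) [Fintype α] : ℕ :=
  sInf {k | ∃ S : Finset α, IsDomSet G ↑S ∧ IsIndep G ↑S ∧ S.card = k}

/-- `S` is a connected dominating set of `G`. -/
def IsConnDomSet {α : Type*} (G : SimpleGraph α) (S : Set α) : Prop :=
  IsDomSet G S ∧ (G.induce S).Connected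

/-- The connected domination number `γ_c(G)`. -/
noncomputable def connDomNum {α : Type*} (G : SimpleGraph α) [Fintype α] : ℕ :=
  sInf {k | ∃ S : Finset α, IsConnDomSet G ↑S ∧ S.card = k}

/-- `D` is a super dominating set of `G`: every `w ∉ D` has a neighbor `u ∈ D` with
`N(u) ⊆ D ∪ {w}`. -/
def IsSuperDomSet {α : Type*} (G : SimpleGraph α) (D : Set α) : Prop :=
  ∀ w ∉ D, ∃ u ∈ D, G.Adj u w ∧ ∀ x, G.Adj u x → x ∈ D ∪ {w}

/-- The super domination number `γ_sp(G)`. -/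
noncomputable def superDomNum {α : Type*} (G : SimpleGraph α) [Fintype α] : ℕ :=
  sInf {k | ∃ S : Finset α, IsSuperDomSet G ↑S ∧ S.card = k}

/-- The number of end vertices (vertices of degree one) of `G`, denoted `n₁(G)`. -/
noncomputable def endVertCount {α : Type*} (G : SimpleGraph α) [Fintype α] : ℕ :=
  Nat.card {u : α // G.degree u = 1}
/-!
Upper bound: copying an optimal Roman dominating function of `H` into every copy gives one of
`G ∘ H`. Lower bound: an optimal Roman dominating function `F` of `G ∘ H` restricts to each copy
of `H`. If the root of the copy is dominated inside the copy (or is not labelled `0`), the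
restriction is a Roman dominating function of `H`, so that copy carries weight at least `γ_R(H)`;
otherwise relabelling the root by `1` repairs it, so the copy carries weight at least
`γ_R(H) - 1`. The roots of the copies of the first kind dominate `G`, since a root of the second
kind must be dominated by a root labelled `2` in a neighbouring copy.
-/

theorem exists_isRDF_sum_eq_romanDomNum {α : Type*} [Fintype α] (G : SimpleGraph α) :
    ∃ f : α → ℕ, IsRDF G f ∧ ∑ u, f u = romanDomNum G :=
  Nat.sInf_mem (s := {k | ∃ f : α → ℕ, IsRDF G f ∧ ∑ u, f u = k})
    ⟨_, fun _ => 2, ⟨fun _ => le_rfl, fun _ h => absurd h two_ne_zero⟩, rfl⟩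

theorem romanDomNum_le_sum {α : Type*} [Fintype α] {G : SimpleGraph α} {f : α → ℕ}
    (hf : IsRDF G f) : romanDomNum G ≤ ∑ u, f u :=
  Nat.sInf_le ⟨f, hf, rfl⟩

theorem domNum_le_card {α : Type*} [Fintype α] {G : SimpleGraph α} {S : Finset α}
    (hS : IsDomSet G ↑S) : domNum G ≤ #S :=
  Nat.sInf_le ⟨S, hS, rfl⟩

theorem romanDomNum_pos {α : Type*} [Fintype α] [Nonempty α] (G : SimpleGraph α) :
    0 < romanDomNum G := by
  obtain ⟨f, hf, hsum⟩ := exists_isRDF_sum_eq_romanDomNum G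
  refine Nat.pos_of_ne_zero fun h0 => ?_
  have hzero : ∀ u, f u = 0 := fun u => sum_eq_zero_iff.mp (hsum.trans h0) u (mem_univ u)
  obtain ⟨w, -, hw⟩ := hf.2 (Classical.arbitrary α) (hzero _)
  simp [hzero w] at hw

def RootDominatedInCopy {α β : Type*} (H : SimpleGraph β) (v : β) (F : α × β → ℕ)
    (a : α) : Prop :=
  F (a, v) ≠ 0 ∨ ∃ w, H.Adj v w ∧ F (a, w) = 2

namespace IsRDF

variable {α β : Type*} {G : SimpleGraph α} {H : SimpleGraph β} {v : β} {F : α × β → ℕ}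

theorem comp_snd {f : β → ℕ} (hf : IsRDF H f) : IsRDF (rootedProd G H v) (fun x => f x.2) :=
  ⟨fun x => hf.1 x.2, fun x hx =>
    let ⟨w, hw, hw2⟩ := hf.2 x.2 hx
    ⟨(x.1, w), Or.inr ⟨rfl, hw⟩, hw2⟩⟩

theorem exists_adj_copy_of_ne_root (hF : IsRDF (rootedProd G H v) F) {a : α} {b : β}
    (hb : b ≠ v) (h0 : F (a, b) = 0) : ∃ w, H.Adj b w ∧ F (a, w) = 2 := by
  obtain ⟨⟨c, w⟩, hadj | ⟨rfl, hadj⟩, hw⟩ := hF.2 (a, b) h0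
  · exact absurd hadj.1 hb
  · exact ⟨w, hadj, hw⟩

theorem copy (hF : IsRDF (rootedProd G H v) F) {a : α} (ha : RootDominatedInCopy H v F a) :
    IsRDF H (fun b => F (a, b)) := by
  refine ⟨fun b => hF.1 (a, b), fun b h0 => ?_⟩
  rcases eq_or_ne b v with rfl | hb
  · exact ha.resolve_left (not_not.mpr h0)
  · exact hF.exists_adj_copy_of_ne_root hb h0

theorem update_copy_root (hF : IsRDF (rootedProd G H v) F) {a : α} (h0 : F (a, v) = 0) :
    IsRDF H (Function.update (fun b => F (a, b)) v 1) := by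
  refine ⟨fun b => ?_, fun b hb0 => ?_⟩
  · rcases eq_or_ne b v with rfl | hb
    · simp
    · simpa [hb] using hF.1 (a, b)
  · have hb : b ≠ v := by rintro rfl; simp at hb0
    rw [Function.update_of_ne hb] at hb0
    obtain ⟨w, hadj, hw⟩ := hF.exists_adj_copy_of_ne_root hb hb0
    have hw' : w ≠ v := by rintro rfl; omega
    exact ⟨w, hadj, by rwa [Function.update_of_ne hw']⟩

theorem isDomSet_rootDominatedInCopy [Fintype α] (hF : IsRDF (rootedProd G H v) F) :
    IsDomSet G ↑(univ.filter (RootDominatedInCopy H v F)) := by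
  intro a ha
  simp only [coe_filter, mem_univ, true_and, Set.mem_ofPred_eq, RootDominatedInCopy,
    not_or, not_not] at ha
  obtain ⟨⟨c, w⟩, ⟨-, rfl, hac⟩ | ⟨rfl, hadj⟩, hw⟩ := hF.2 (a, v) ha.1
  · exact ⟨c, by simp [RootDominatedInCopy, hw], hac.symm⟩
  · exact absurd ⟨w, hadj, hw⟩ ha.2

theorem romanDomNum_sub_one_add_le_sum_copy [Fintype β] (hF : IsRDF (rootedProd G H v) F)
    (a : α) :
    romanDomNum H - 1 + (if RootDominatedInCopy H v F a then 1 else 0) ≤ ∑ b, F (a, b) := by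
  split_ifs with ha
  · have : Nonempty β := ⟨v⟩
    have := romanDomNum_le_sum (hF.copy ha)
    have := romanDomNum_pos H
    omega
  · have h0 : F (a, v) = 0 := by_contra fun h => ha (Or.inl h)
    have hle := romanDomNum_le_sum (hF.update_copy_root h0)
    rw [sum_update_of_mem (mem_univ v)] at hle
    have hsplit : ∑ b, F (a, b) = F (a, v) + ∑ b ∈ univ \ {v}, F (a, b) :=
      sum_eq_add_sum_sdiff_singleton_of_mem (mem_univ v) _
    omega

end IsRDF

section RootedProduct

variable {α β : Type*} [Fintype α] [Fintype β] {G : SimpleGraph α} {H : SimpleGraph β} {v : β}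

theorem romanDomNum_rootedProd_le :
    romanDomNum (rootedProd G H v) ≤ Fintype.card α * romanDomNum H := by
  obtain ⟨f, hf, hsum⟩ := exists_isRDF_sum_eq_romanDomNum H
  calc romanDomNum (rootedProd G H v)
      ≤ ∑ x : α × β, f x.2 := romanDomNum_le_sum hf.comp_snd
    _ = Fintype.card α * romanDomNum H := by
      simp only [Fintype.sum_prod_type, sum_const, card_univ, hsum, smul_eq_mul]

theorem card_mul_romanDomNum_sub_one_add_domNum_le :
    Fintype.card α * (romanDomNum H - 1) + domNum G ≤ romanDomNum (rootedProd G H v) := by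
  obtain ⟨F, hF, hsum⟩ := exists_isRDF_sum_eq_romanDomNum (rootedProd G H v)
  calc Fintype.card α * (romanDomNum H - 1) + domNum G
      ≤ Fintype.card α * (romanDomNum H - 1) + #(univ.filter (RootDominatedInCopy H v F)) :=
        Nat.add_le_add_left (domNum_le_card hF.isDomSet_rootDominatedInCopy) _
    _ = ∑ a, (romanDomNum H - 1 + if RootDominatedInCopy H v F a then 1 else 0) := by
      rw [sum_add_distrib, sum_const, card_univ, smul_eq_mul, sum_boole, Nat.cast_id]
    _ ≤ ∑ a, ∑ b, F (a, b) := sum_le_sum fun a _ => hF.romanDomNum_sub_one_add_le_sum_copy a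
    _ = romanDomNum (rootedProd G H v) := by rw [← Fintype.sum_prod_type, hsum]

end RootedProduct

theorem stmt4_general {α β : Type*} [Fintype α] [Fintype β]
    (G : SimpleGraph α) (H : SimpleGraph β) (v : β) :
    Fintype.card α * (romanDomNum H - 1) + domNum G ≤ romanDomNum (rootedProd G H v) ∧
    romanDomNum (rootedProd G H v) ≤ Fintype.card α * romanDomNum H :=
  ⟨card_mul_romanDomNum_sub_one_add_domNum_le, romanDomNum_rootedProd_le⟩

/-- `n·(γ_R(H) − 1) + γ(G) ≤ γ_R(G∘H) ≤ n·γ_R(H)`. -/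
theorem stmt4 {α β : Type*} [Fintype α] [Fintype β]
    (G : SimpleGraph α) (H : SimpleGraph β) (v : β)
    (hn : 2 ≤ Fintype.card α) (hm : 2 ≤ Fintype.card β) :
    Fintype.card α * (romanDomNum H - 1) + domNum G ≤ romanDomNum (rootedProd G H v) ∧
    romanDomNum (rootedProd G H v) ≤ Fintype.card α * romanDomNum H :=
  stmt4_general G H v
end

section
/- For a path graph P_n (n ≥ 2) and the star graph S_{1,m} (m ≥ 2) rooted at its central vertex, the independent domination number of the rooted product satisfies i(P_n ∘ S_{1,m}) = m·n − ⌈n/2⌉·(m − 1). -/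
open Finset
open scoped Classical

/-!
In `G ∘ S_{1,m}` every leaf is adjacent only to its center. So if `D` is an independent
dominating set and `I` is the set of vertices of `G` whose center lies in `D`, then `I` is
independent in `G` and `D` contains all `m` leaves over each vertex outside `I`. Conversely the
centers over an independent `I` together with all leaves over its complement form an independent
dominating set. Hence `i(G ∘ S_{1,m}) = min_I (|I| + (|V(G)| - |I|) m) = m |V(G)| - α(G) (m - 1)`.
Finally `α(P_n) = ⌈n/2⌉`: `a ↦ ⌊a/2⌋` is injective on independent sets of `P_n`, and the even
vertices attain the bound.
-/

section RootedStar

variable {α : Type*} (G : SimpleGraph α) (m : ℕ)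

abbrev rootedStarProd : SimpleGraph (α × (Fin 1 ⊕ Fin m)) :=
  rootedProd G (completeBipartiteGraph (Fin 1) (Fin m)) (Sum.inl 0)

variable {G m} {a b : α} {c c' : Fin 1} {j j' : Fin m}

@[simp]
lemma rootedStarProd_adj_inl_inl :
    (rootedStarProd G m).Adj (a, .inl c) (b, .inl c') ↔ G.Adj a b := by
  simp [rootedProd, Fin.fin_one_eq_zero]

@[simp]
lemma rootedStarProd_adj_inl_inr : (rootedStarProd G m).Adj (a, .inl c) (b, .inr j) ↔ a = b := by
  simp [rootedProd]

@[simp]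
lemma rootedStarProd_adj_inr_inl : (rootedStarProd G m).Adj (a, .inr j) (b, .inl c) ↔ a = b := by
  simp [rootedProd]

@[simp]
lemma rootedStarProd_not_adj_inr_inr : ¬ (rootedStarProd G m).Adj (a, .inr j) (b, .inr j') := by
  simp [rootedProd]

variable [Fintype α]

variable (m) in
noncomputable def starCover (I : Finset α) : Finset (α × (Fin 1 ⊕ Fin m)) :=
  I ×ˢ {Sum.inl 0} ∪ Iᶜ ×ˢ univ.map .inr

noncomputable def centerSet (D : Finset (α × (Fin 1 ⊕ Fin m))) : Finset α :=
  univ.filter fun a => (a, Sum.inl 0) ∈ D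

variable {I : Finset α} {D : Finset (α × (Fin 1 ⊕ Fin m))}

@[simp]
lemma mem_starCover_inl : (a, .inl c) ∈ starCover m I ↔ a ∈ I := by
  simp [starCover, Fin.fin_one_eq_zero]

@[simp]
lemma mem_starCover_inr : (a, .inr j) ∈ starCover m I ↔ a ∉ I := by
  simp [starCover]

@[simp]
lemma mem_centerSet : a ∈ centerSet D ↔ (a, .inl 0) ∈ D := by
  simp [centerSet]

lemma card_starCover :
    #(starCover m I) = #I + (Fintype.card α - #I) * m := by
  rw [starCover, card_union_of_disjoint, card_product, card_product, card_compl]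
  · simp
  · simp [disjoint_left]

lemma isDomSet_starCover (hm : 0 < m) (I : Finset α) :
    IsDomSet (rootedStarProd G m) (starCover m I) := by
  rintro ⟨a, c | j⟩ h
  · refine ⟨(a, .inr ⟨0, hm⟩), ?_, by simp⟩
    simp_all
  · refine ⟨(a, .inl 0), ?_, by simp⟩
    simp_all

lemma IsIndep.starCover (hI : IsIndep G I) : IsIndep (rootedStarProd G m) (starCover m I) := by
  rintro ⟨a, c | j⟩ ha ⟨b, c' | j'⟩ hb hab <;> simp_all
  exact hI a ha b hb hab

lemma IsIndep.centerSet (hD : IsIndep (rootedStarProd G m) D) : IsIndep G (centerSet D) := by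
  intro a ha b hb hab
  exact hD _ (mem_centerSet.1 ha) _ (mem_centerSet.1 hb) (by simpa using hab)

lemma IsDomSet.starCover_centerSet_subset (hD : IsDomSet (rootedStarProd G m) D) :
    starCover m (centerSet D) ⊆ D := by
  rintro ⟨a, c | j⟩ h
  · simpa [Fin.fin_one_eq_zero c] using h
  · by_contra hj
    obtain ⟨⟨b, c' | j'⟩, hb, hadj⟩ := hD _ hj
    · simp_all [Fin.fin_one_eq_zero c']
    · simp at hadj

end RootedStar

section IndepNum

variable {α : Type*} [Fintype α] {G : SimpleGraph α}

lemma bddAbove_indepSetCards (G : SimpleGraph α) :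
    BddAbove {k | ∃ S : Finset α, IsIndep G ↑S ∧ S.card = k} :=
  ⟨Fintype.card α, by rintro _ ⟨S, -, rfl⟩; exact card_le_univ S⟩

lemma IsIndep.card_le_indepNum {I : Finset α} (hI : IsIndep G I) : #I ≤ indepNum G :=
  le_csSup (bddAbove_indepSetCards G) ⟨I, hI, rfl⟩

lemma exists_isIndep_card_eq_indepNum (G : SimpleGraph α) :
    ∃ I : Finset α, IsIndep G I ∧ #I = indepNum G :=
  Nat.sSup_mem (s := {k | ∃ S : Finset α, IsIndep G ↑S ∧ S.card = k})
    ⟨0, ∅, by simp [IsIndep], rfl⟩ (bddAbove_indepSetCards G)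

end IndepNum

lemma add_sub_mul_eq_mul_sub_mul {k n m : ℕ} (hk : k ≤ n) (hm : 0 < m) :
    k + (n - k) * m = m * n - k * (m - 1) := by
  obtain ⟨l, rfl⟩ := Nat.exists_eq_add_of_le hk
  obtain ⟨m, rfl⟩ := Nat.exists_eq_add_of_lt hm
  rw [Nat.add_sub_cancel_left, Nat.add_sub_cancel, eq_comm, Nat.sub_eq_iff_eq_add (by nlinarith)]
  ring

theorem indepDomNum_rootedStarProd {α : Type*} [Fintype α] (G : SimpleGraph α) {m : ℕ}
    (hm : 0 < m) :
    indepDomNum (rootedStarProd G m) = m * Fintype.card α - indepNum G * (m - 1) := by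
  have card_starCover_eq (I : Finset α) :
      #(starCover m I) = m * Fintype.card α - #I * (m - 1) := by
    rw [card_starCover, add_sub_mul_eq_mul_sub_mul (card_le_univ I) hm]
  obtain ⟨I₀, hI₀, hcard⟩ := exists_isIndep_card_eq_indepNum G
  have hD₀ : #(starCover m I₀) ∈
      {k | ∃ S : Finset _, IsDomSet (rootedStarProd G m) ↑S ∧
        IsIndep (rootedStarProd G m) ↑S ∧ S.card = k} :=
    ⟨_, isDomSet_starCover hm I₀, hI₀.starCover, rfl⟩
  refine le_antisymm ?_ (le_csInf ⟨_, hD₀⟩ ?_)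
  · rw [← hcard, ← card_starCover_eq]
    exact Nat.sInf_le hD₀
  rintro _ ⟨D, hdom, hind, rfl⟩
  calc m * Fintype.card α - indepNum G * (m - 1)
      ≤ m * Fintype.card α - #(centerSet D) * (m - 1) :=
        Nat.sub_le_sub_left (Nat.mul_le_mul_right _ hind.centerSet.card_le_indepNum) _
    _ = #(starCover m (centerSet D)) := (card_starCover_eq _).symm
    _ ≤ #D := card_le_card hdom.starCover_centerSet_subset

section Path

variable {n : ℕ}

lemma IsIndep.card_le_of_pathGraph {I : Finset (Fin n)}
    (hI : IsIndep (SimpleGraph.pathGraph n) I) :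
    #I ≤ (n + 1) / 2 := by
  simpa using card_le_card_of_injOn (fun a : Fin n => a.val / 2) (t := range ((n + 1) / 2))
    (fun a _ => by simp only [coe_range, Set.mem_Iio]; omega)
    (fun a ha b hb hab => by
      by_contra hne
      exact hI a ha b hb (SimpleGraph.pathGraph_adj.2 (by simp only at hab; omega)))

lemma isIndep_pathGraph_even :
    IsIndep (SimpleGraph.pathGraph n) ↑(univ.filter fun a : Fin n => a.val % 2 = 0) := by
  intro a ha b hb hab
  rw [mem_coe, mem_filter] at ha hb
  rw [SimpleGraph.pathGraph_adj] at hab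
  omega

lemma card_filter_even_fin : #(univ.filter fun a : Fin n => a.val % 2 = 0) = (n + 1) / 2 := by
  conv_rhs => rw [← card_range ((n + 1) / 2)]
  refine card_bij (fun (a : Fin n) _ => a.val / 2)
    (fun a _ => by simp only [mem_range]; omega) ?_ ?_
  · intro a ha b hb hab
    simp only [mem_filter, mem_univ, true_and] at ha hb
    exact Fin.ext (by omega)
  · intro k hk
    exact ⟨⟨2 * k, by rw [mem_range] at hk; omega⟩, by simp, by simp⟩

lemma indepNum_pathGraph : indepNum (SimpleGraph.pathGraph n) = (n + 1) / 2 := by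
  obtain ⟨I, hI, hcard⟩ := exists_isIndep_card_eq_indepNum (SimpleGraph.pathGraph n)
  refine le_antisymm (hcard ▸ hI.card_le_of_pathGraph) ?_
  exact card_filter_even_fin ▸ isIndep_pathGraph_even.card_le_indepNum

end Path

theorem stmt15_general (n m : ℕ) (hm : 2 ≤ m) :
    indepDomNum (rootedProd (SimpleGraph.pathGraph n)
        (completeBipartiteGraph (Fin 1) (Fin m)) (Sum.inl 0)) =
      m * n - (n + 1) / 2 * (m - 1) := by
  rw [indepDomNum_rootedStarProd _ (by omega), Fintype.card_fin, indepNum_pathGraph]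

/-- for the path `P_n` and the star `S_{1,m}` rooted at its central vertex,
`i(P_n ∘ S_{1,m}) = m·n − ⌈n/2⌉·(m − 1)`. -/
theorem stmt15 (n m : ℕ) (hn : 2 ≤ n) (hm : 2 ≤ m) :
    indepDomNum (rootedProd (SimpleGraph.pathGraph n)
        (completeBipartiteGraph (Fin 1) (Fin m)) (Sum.inl 0)) =
      m * n - (n + 1) / 2 * (m - 1) :=
  stmt15_general n m hm
end
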